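/- If B = {B_1,...,B_m} is an (n,m,K,a,λ)-BSWEDF over a finite abelian group G of order n, then λ ≥ ⌈k̃·a·(m−1)/(n−1)⌉, where k̃ = lcm(k_1,...,k_m) and a = Σ k_i. -/
import Mathlib


/-- The multiset of external differences `{x - y : x ∈ X, y ∈ Y}` (with multiplicity). -/
def extDiff {G : Type*} [Sub G] (X Y : Multiset G) : Multiset G :=
  X.bind fun x => Y.map fun y => x - y

/-- The multiset `⋃_{i ≠ j} D(B_i, B̃_j)`, where the standard weighted multiset `B̃_j`
repeats each element of `B_j` exactly `ktil / |B_j|` times. -/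
def wtotal {G : Type*} [Sub G] {m : ℕ} (B : Fin m → Finset G) (ktil : ℕ) : Multiset G :=
  ∑ i : Fin m, ∑ j : Fin m,
    if i ≠ j then extDiff (B i).val ((ktil / (B j).card) • (B j).val) else 0

lemma multiset_card_finset_sum {α β : Type*} (s : Finset α) (f : α → Multiset β) :
    Multiset.card (∑ x ∈ s, f x) = ∑ x ∈ s, Multiset.card (f x) := by
  classical
  induction s using Finset.cons_induction with
  | empty => simp
  | cons a s ha ih => simp [Finset.sum_cons, ih]

lemma card_extDiff {G : Type*} [Sub G] (X Y : Multiset G) :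
    Multiset.card (extDiff X Y) = Multiset.card X * Multiset.card Y := by
  simp [extDiff]

theorem stmt1 {G : Type*} [AddCommGroup G] [Fintype G] [DecidableEq G]
    (n m : ℕ) (hn : Fintype.card G = n) (hn2 : 2 ≤ n)
    (B : Fin m → Finset G)
    (hdisj : ∀ i j, i ≠ j → Disjoint (B i) (B j))
    (hne : ∀ i, (B i).Nonempty)
    (a ktil : ℕ) (ha : a = ∑ i, (B i).card)
    (hktil : ktil = Finset.univ.lcm fun i => (B i).card)
    (lam : ℕ) (hlampos : 0 < lam)
    (hbound : ∀ δ : G, δ ≠ 0 → Multiset.count δ (wtotal B ktil) ≤ lam)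
    (hmin : ∀ μ : ℕ, 0 < μ →
      (∀ δ : G, δ ≠ 0 → Multiset.count δ (wtotal B ktil) ≤ μ) → lam ≤ μ) :
    lam ≥ ⌈(ktil * a * (m - 1) : ℚ)/ (n - 1)⌉₊ := by
  have hdvd : ∀ j : Fin m, (B j).card ∣ ktil := by
    intro j; rw [hktil]; exact Finset.dvd_lcm (Finset.mem_univ j)
  -- card of wtotal
  have hcard : Multiset.card (wtotal B ktil) = ktil * a * (m - 1) := by
    unfold wtotal
    rw [multiset_card_finset_sum]
    have : ∀ i : Fin m, (Multiset.card (∑ j : Fin m,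
        if i ≠ j then extDiff (B i).val ((ktil / (B j).card) • (B j).val) else 0))
        = (m - 1) * ((B i).card * ktil) := by
      intro i
      rw [multiset_card_finset_sum]
      have h1 : ∀ j : Fin m, Multiset.card
          (if i ≠ j then extDiff (B i).val ((ktil / (B j).card) • (B j).val) else 0)
          = if i ≠ j then (B i).card * ktil else 0 := by
        intro j
        split
        · rw [card_extDiff, Multiset.card_nsmul]
          have hc : Multiset.card (B j).val = (B j).card := rfl
          rw [hc]
          congr 1
          exact Nat.div_mul_cancel (hdvd j)
        · simp
      simp only [h1]
      rw [Finset.sum_ite, Finset.sum_const, Finset.sum_const, smul_zero, add_zero,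
        smul_eq_mul]
      congr 1
      have : Finset.filter (fun j => i ≠ j) Finset.univ = Finset.univ.erase i := by
        ext j; simp [ne_comm, eq_comm, and_comm]
      rw [this, Finset.card_erase_of_mem (Finset.mem_univ i), Finset.card_univ,
        Fintype.card_fin]
    simp only [this]
    rw [← Finset.mul_sum, ← Finset.sum_mul, ← ha]
    ring
  -- 0 is not in wtotal
  have hzero : (0 : G) ∉ wtotal B ktil := by
    intro h0
    unfold wtotal at h0
    rw [Multiset.mem_sum] at h0
    obtain ⟨i, -, h0⟩ := h0
    rw [Multiset.mem_sum] at h0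
    obtain ⟨j, -, h0⟩ := h0
    by_cases hij : i ≠ j
    · rw [if_pos hij] at h0
      simp only [extDiff, Multiset.mem_bind, Multiset.mem_map] at h0
      obtain ⟨x, hx, y, hy, hxy⟩ := h0
      have hy' : y ∈ (B j).val := (Multiset.mem_nsmul.mp hy).2
      have : x = y := by
        have := sub_eq_zero.mp hxy
        exact this
      exact (Finset.disjoint_left.mp (hdisj i j hij) hx (this ▸ hy'))
    · rw [if_neg hij] at h0; simp at h0
  -- card ≤ lam * (n-1)
  have hkey : ktil * a * (m - 1) ≤ lam * (n - 1) := by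
    rw [← hcard]
    have h1 : Multiset.card (wtotal B ktil) =
        ∑ δ ∈ Finset.univ.erase (0 : G), Multiset.count δ (wtotal B ktil) := by
      rw [← Multiset.toFinset_sum_count_eq (wtotal B ktil)]
      apply Finset.sum_subset
      · intro x hx
        rw [Multiset.mem_toFinset] at hx
        exact Finset.mem_erase.mpr ⟨fun h => hzero (h ▸ hx), Finset.mem_univ x⟩
      · intro x _ hx
        rw [Multiset.count_eq_zero]
        intro h; exact hx (Multiset.mem_toFinset.mpr h)
    rw [h1]
    calc ∑ δ ∈ Finset.univ.erase (0 : G), Multiset.count δ (wtotal B ktil)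
        ≤ ∑ _δ ∈ Finset.univ.erase (0 : G), lam := by
          apply Finset.sum_le_sum
          intro δ hδ
          exact hbound δ (Finset.mem_erase.mp hδ).1
      _ = lam * (n - 1) := by
          rw [Finset.sum_const, Finset.card_erase_of_mem (Finset.mem_univ 0),
            Finset.card_univ, hn, smul_eq_mul, mul_comm]
  -- conclude
  rcases Nat.eq_zero_or_pos m with hm | hm
  · subst hm
    have : a = 0 := by simp [ha]
    subst this
    simp
  · rw [ge_iff_le, Nat.ceil_le, div_le_iff₀ (by
      have : (2 : ℚ) ≤ (n : ℚ) := by exact_mod_cast hn2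
      linarith)]
    have hm1 : ((m : ℚ) - 1) = ((m - 1 : ℕ) : ℚ) := by
      rw [Nat.cast_sub hm]; simp
    have hn1 : ((n : ℚ) - 1) = ((n - 1 : ℕ) : ℚ) := by
      rw [Nat.cast_sub (by omega)]; simp
    rw [hm1, hn1]
    exact_mod_cast hkey
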